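/- Let F be an algebraically closed field, e₁ = (1,0,0), e₂ = (0,1,0), and let k₁, k₂ ≥ 2 be integers. For A ∈ O(F), there exist X, Y ∈ O(F) with A = (0, e₁; 0, 0)·X^{k₁} + (0, 0; e₂, 0)·Y^{k₂} if and only if A has the form (α, (b₁,0,b₃); (0,c₂,c₃), δ). -/

import Mathlib

/-- Zorn vector matrices: the split octonion algebra over `F`. -/
structure Oct (F : Type*) where
  a : F              -- upper-left scalar η
  b : Fin 3 → F      -- upper-right vector x
  c : Fin 3 → F      -- lower-left vector y
  d : F              -- lower-right scalar ζ

namespace Oct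

variable {F : Type*} [Field F]

/-- standard bilinear form on F^3 -/
def dot (x y : Fin 3 → F) : F := x 0 * y 0 + x 1 * y 1 + x 2 * y 2

/-- cross product on F^3, satisfying ⟨x ∧ y, z⟩ = det(x,y,z) -/
def cross (x y : Fin 3 → F) : Fin 3 → F :=
  ![x 1 * y 2 - x 2 * y 1, x 2 * y 0 - x 0 * y 2, x 0 * y 1 - x 1 * y 0]

instance : Add (Oct F) :=
  ⟨fun A B => ⟨A.a + B.a, A.b + B.b, A.c + B.c, A.d + B.d⟩⟩

instance : Mul (Oct F) :=
  ⟨fun A B =>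
    ⟨A.a * B.a + dot A.b B.c,
     A.a • B.b + B.d • A.b + cross A.c B.c,
     A.d • B.c + B.a • A.c + cross A.b B.b,
     A.d * B.d + dot A.c B.b⟩⟩

instance : SMul F (Oct F) :=
  ⟨fun t A => ⟨t * A.a, t • A.b, t • A.c, t * A.d⟩⟩

instance : One (Oct F) := ⟨⟨1, 0, 0, 1⟩⟩

/-- powers, via A^{n+1} = A · A^n (well-defined by power-associativity) -/
def pow (A : Oct F) : ℕ → Oct F
  | 0 => 1
  | n + 1 => A * pow A n

/-- octonion conjugation -/
def conj (A : Oct F) : Oct F := ⟨A.d, -A.b, -A.c, A.a⟩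

/-- the norm form -/
def norm (A : Oct F) : F := A.a * A.d - dot A.b A.c

end Oct

/-
Both directions rest on the explicit product formula for e₁·P + e₂·Q: its coordinates x₂
and y₁ vanish and the other six are independent entries of P and Q. For the converse these
entries are prescribed inside idempotents (0, x; y, 1) with ⟨x, y⟩ = 0, and an idempotent
is its own k-th power for every k ≥ 1.
-/

namespace Oct

variable {F : Type*} [Field F]

lemma mul_def (A B : Oct F) : A * B =
    ⟨A.a * B.a + dot A.b B.c,
     A.a • B.b + B.d • A.b + cross A.c B.c,
     A.d • B.c + B.a • A.c + cross A.b B.b,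
     A.d * B.d + dot A.c B.b⟩ := rfl

lemma add_def (A B : Oct F) : A + B = ⟨A.a + B.a, A.b + B.b, A.c + B.c, A.d + B.d⟩ := rfl

lemma dot_comm (x y : Fin 3 → F) : dot x y = dot y x := by
  simp only [dot]; ring

@[simp] lemma dot_zero_right (x : Fin 3 → F) : dot x 0 = 0 := by simp [dot]

@[simp] lemma cross_zero_right (x : Fin 3 → F) : cross x 0 = 0 := by
  ext i; fin_cases i <;> simp [cross]

@[simp] lemma cross_self (x : Fin 3 → F) : cross x x = 0 := by
  ext i; fin_cases i <;> simp [cross, mul_comm]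

lemma mul_one (A : Oct F) : A * 1 = A := by
  change A * ⟨1, 0, 0, 1⟩ = A
  simp [mul_def]

lemma pow_succ_eq_self_of_mul_self {A : Oct F} (hA : A * A = A) (n : ℕ) :
    pow A (n + 1) = A := by
  induction n with
  | zero => exact mul_one A
  | succ n ih => rw [pow, ih, hA]

lemma mk_zero_one_mul_self {x y : Fin 3 → F} (h : dot x y = 0) :
    (⟨0, x, y, 1⟩ : Oct F) * ⟨0, x, y, 1⟩ = ⟨0, x, y, 1⟩ := by
  simp [mul_def, h, dot_comm y x]

lemma e₁_mul_add_e₂_mul (P Q : Oct F) :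
    (⟨0, ![1, 0, 0], 0, 0⟩ : Oct F) * P + (⟨0, 0, ![0, 1, 0], 0⟩ : Oct F) * Q
      = ⟨P.c 0, ![P.d + Q.c 2, 0, -Q.c 0], ![0, Q.a - P.b 2, P.b 1], Q.b 1⟩ := by
  simp only [mul_def, add_def, mk.injEq]
  refine ⟨by simp [dot], ?_, ?_, by simp [dot]⟩ <;>
    ext i <;> fin_cases i <;> simp [cross, neg_add_eq_sub]

end Oct

open Oct
theorem stmt_14_general {F : Type*} [Field F] (A : Oct F)
    (k₁ k₂ : ℕ) (hk₁ : 2 ≤ k₁) (hk₂ : 2 ≤ k₂) :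
    (∃ X Y : Oct F,
        A = (⟨0, ![1, 0, 0], 0, 0⟩ : Oct F) * pow X k₁
          + (⟨0, 0, ![0, 1, 0], 0⟩ : Oct F) * pow Y k₂)
      ↔ ∃ α b₁ b₃ c₂ c₃ δ : F,
          A = (⟨α, ![b₁, 0, b₃], ![0, c₂, c₃], δ⟩ : Oct F) := by
  simp only [e₁_mul_add_e₂_mul]
  constructor
  · rintro ⟨X, Y, rfl⟩
    exact ⟨_, _, _, _, _, _, rfl⟩
  · rintro ⟨α, b₁, b₃, c₂, c₃, δ, rfl⟩
    obtain ⟨m₁, rfl⟩ : ∃ m, k₁ = m + 1 := ⟨k₁ - 1, by omega⟩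
    obtain ⟨m₂, rfl⟩ : ∃ m, k₂ = m + 1 := ⟨k₂ - 1, by omega⟩
    let X : Oct F := ⟨0, ![0, c₃, -c₂], ![α, 0, 0], 1⟩
    let Y : Oct F := ⟨0, ![0, δ, 0], ![-b₃, 0, b₁ - 1], 1⟩
    have hX : pow X (m₁ + 1) = X :=
      pow_succ_eq_self_of_mul_self (mk_zero_one_mul_self (by simp [dot])) m₁
    have hY : pow Y (m₂ + 1) = Y :=
      pow_succ_eq_self_of_mul_self (mk_zero_one_mul_self (by simp [dot])) m₂
    refine ⟨X, Y, ?_⟩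
    rw [hX, hY]
    simp [X, Y]

theorem stmt_14 {F : Type*} [Field F] [IsAlgClosed F] (A : Oct F)
    (k₁ k₂ : ℕ) (hk₁ : 2 ≤ k₁) (hk₂ : 2 ≤ k₂) :
    (∃ X Y : Oct F,
        A = (⟨0, ![1, 0, 0], 0, 0⟩ : Oct F) * pow X k₁
          + (⟨0, 0, ![0, 1, 0], 0⟩ : Oct F) * pow Y k₂)
      ↔ ∃ α b₁ b₃ c₂ c₃ δ : F,
          A = (⟨α, ![b₁, 0, b₃], ![0, c₂, c₃], δ⟩ : Oct F) :=
  stmt_14_general A k₁ k₂ hk₁ hk₂
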